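/- There exists a rational number T₀ > 0 (depending on r, a, b, α and θ) such that for every rational T ≥ T₀ the following holds: for every function m : I×{a,…,b} → ℤ with 0 ≤ m_{i,n} ≤ α_i for all (i,n), if m ≠ 0 and m ≠ α^gtr then θ^gtr(m) ≠ 0. -/
import Mathlib


noncomputable section

/-- `θ^lg(m) + θ^mid(m) + θ^sm(m)` for a function `m` on `I × {a,…,b}`,
where `I = {1,…,r} ∪ {∞}` is encoded as `Option (Fin r)` (`none = ∞`,
`some i` corresponding to the vertex `i+1 ∈ {1,…,r}`). -/
def thetaAux (r : ℕ) (a b : ℤ) (T : ℚ) (θ : Option (Fin r) → ℤ)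
    (m : Option (Fin r) → ℤ → ℤ) : ℚ :=
  -- θ^lg
  (T ^ (r + 1) * ((m none b - m none a : ℤ) : ℚ)
      + ∑ i : Fin r, T ^ ((i : ℕ) + 1) * ((m (some i) b - m (some i) a : ℤ) : ℚ))
  -- θ^mid
  + (∑ i : Option (Fin r), (θ i : ℚ) * ((m i a : ℤ) : ℚ))
  -- θ^sm
  + (-(∑ i : Fin r, T ^ (-(((i : ℕ) : ℤ) + 1)) * ((m (some i) a : ℤ) : ℚ))
      + T ^ (-(r : ℤ) - 1) * ∑ i : Option (Fin r), ∑ n ∈ Finset.Ioo a b, ((m i n : ℤ) : ℚ))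

/-- `θ^gtr(m) = θ^lg(m) + θ^mid(m) + θ^sm(m) − C·m_{∞,a}` where
`C = θ^lg(α^gtr) + θ^mid(α^gtr) + θ^sm(α^gtr)`. -/
def thetaGtr (r : ℕ) (a b : ℤ) (T : ℚ) (θ : Option (Fin r) → ℤ)
    (α : Option (Fin r) → ℕ) (m : Option (Fin r) → ℤ → ℤ) : ℚ :=
  thetaAux r a b T θ m
    - thetaAux r a b T θ (fun i _ => (α i : ℤ)) * ((m none a : ℤ) : ℚ)

lemma keylemma (N : ℕ) (c : ℕ → ℤ) (B T : ℚ)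
    (hBc : ∀ k, |(c k : ℚ)| ≤ B) (hT : 2 * B + 1 ≤ T)
    (hne : ∃ j, j < N ∧ c j ≠ 0) :
    ∑ k ∈ Finset.range N, (c k : ℚ) * T ^ k ≠ 0 := by
  obtain ⟨j0, hj0N, hj0⟩ := hne
  have hB1 : (1 : ℚ) ≤ B := by
    have := hBc j0
    have h1 : (1 : ℚ) ≤ |(c j0 : ℚ)| := by
      have : (1 : ℤ) ≤ |c j0| := Int.one_le_abs hj0
      calc (1:ℚ) ≤ ((|c j0| : ℤ) : ℚ) := by exact_mod_cast this
        _ = |(c j0 : ℚ)| := by push_cast; rfl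
    linarith
  have hT3 : (3 : ℚ) ≤ T := by linarith
  have hT0 : (0 : ℚ) < T := by linarith
  have hT1 : (1 : ℚ) < T := by linarith
  set s := (Finset.range N).filter (fun k => c k ≠ 0) with hs
  have hsne : s.Nonempty := ⟨j0, by simp [hs, Finset.mem_filter, hj0N, hj0]⟩
  set j := s.max' hsne with hj
  have hjmem : j ∈ s := s.max'_mem hsne
  have hjN : j < N := Finset.mem_range.1 (Finset.mem_filter.1 hjmem).1
  have hcj : c j ≠ 0 := (Finset.mem_filter.1 hjmem).2
  have hcj1 : (1 : ℚ) ≤ |(c j : ℚ)| := by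
    have : (1 : ℤ) ≤ |c j| := Int.one_le_abs hcj
    calc (1:ℚ) ≤ ((|c j| : ℤ) : ℚ) := by exact_mod_cast this
      _ = |(c j : ℚ)| := by push_cast; rfl
  -- higher coefficients vanish
  have hhi : ∀ k, j < k → k < N → c k = 0 := by
    intro k hjk hkN
    by_contra hck
    have : k ∈ s := Finset.mem_filter.2 ⟨Finset.mem_range.2 hkN, hck⟩
    have := s.le_max' k this
    omega
  have hsplit : ∑ k ∈ Finset.range N, (c k : ℚ) * T ^ k
      = ∑ k ∈ Finset.range (j + 1), (c k : ℚ) * T ^ k := by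
    rw [← Finset.sum_range_add_sum_Ico _ (Nat.succ_le_of_lt hjN)]
    have : ∑ k ∈ Finset.Ico (j + 1) N, (c k : ℚ) * T ^ k = 0 := by
      apply Finset.sum_eq_zero
      intro k hk
      rw [Finset.mem_Ico] at hk
      rw [hhi k (by omega) hk.2]
      simp
    rw [this, add_zero]
  rw [hsplit, Finset.sum_range_succ]
  -- bound the tail
  have htail : |∑ k ∈ Finset.range j, (c k : ℚ) * T ^ k| < T ^ j := by
    calc |∑ k ∈ Finset.range j, (c k : ℚ) * T ^ k|
        ≤ ∑ k ∈ Finset.range j, |(c k : ℚ) * T ^ k| := Finset.abs_sum_le_sum_abs _ _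
      _ ≤ ∑ k ∈ Finset.range j, B * T ^ k := by
          apply Finset.sum_le_sum
          intro k _
          rw [abs_mul, abs_pow, abs_of_pos hT0]
          exact mul_le_mul_of_nonneg_right (hBc k) (by positivity)
      _ = B * ((T ^ j - 1) / (T - 1)) := by rw [← Finset.mul_sum, geom_sum_eq (ne_of_gt hT1)]
      _ < T ^ j := by
          rw [mul_div_assoc', div_lt_iff₀ (by linarith : (0:ℚ) < T - 1)]
          nlinarith [mul_nonneg (by linarith : (0:ℚ) ≤ T - 1 - 2*B) (le_of_lt (pow_pos hT0 j)),
            pow_pos hT0 j]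
  have hlead : T ^ j ≤ |(c j : ℚ) * T ^ j| := by
    rw [abs_mul, abs_pow, abs_of_pos hT0]
    nlinarith [pow_pos hT0 j]
  intro h
  have : (c j : ℚ) * T ^ j = -(∑ k ∈ Finset.range j, (c k : ℚ) * T ^ k) := by linarith
  rw [← abs_neg (∑ k ∈ Finset.range j, (c k : ℚ) * T ^ k), ← this] at htail
  linarith

def coeffFn (r : ℕ) (a b : ℤ) (θ : Option (Fin r) → ℤ)
    (m : Option (Fin r) → ℤ → ℤ) : ℕ → ℤ := fun k =>
  if h0 : k = 0 then ∑ i : Option (Fin r), ∑ n ∈ Finset.Ioo a b, m i n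
  else if h1 : k ≤ r then -(m (some ⟨r - k, by omega⟩) a)
  else if h2 : k = r + 1 then ∑ i : Option (Fin r), θ i * m i a
  else if h3 : k ≤ 2 * r + 1 then
    m (some ⟨k - r - 2, by omega⟩) b - m (some ⟨k - r - 2, by omega⟩) a
  else if h4 : k = 2 * r + 2 then m none b - m none a
  else 0

lemma coeff0 (r : ℕ) (a b : ℤ) (θ : Option (Fin r) → ℤ) (m : Option (Fin r) → ℤ → ℤ) :
    coeffFn r a b θ m 0 = ∑ i : Option (Fin r), ∑ n ∈ Finset.Ioo a b, m i n := by
  unfold coeffFn; rw [dif_pos rfl]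

lemma coeff_low (r : ℕ) (a b : ℤ) (θ : Option (Fin r) → ℤ) (m : Option (Fin r) → ℤ → ℤ)
    (k : ℕ) (h0 : k ≠ 0) (h1 : k ≤ r) :
    coeffFn r a b θ m k = -(m (some ⟨r - k, by omega⟩) a) := by
  unfold coeffFn; rw [dif_neg h0, dif_pos h1]

lemma coeff_mid (r : ℕ) (a b : ℤ) (θ : Option (Fin r) → ℤ) (m : Option (Fin r) → ℤ → ℤ) :
    coeffFn r a b θ m (r + 1) = ∑ i : Option (Fin r), θ i * m i a := by
  unfold coeffFn; rw [dif_neg (by omega), dif_neg (by omega), dif_pos rfl]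

lemma coeff_high (r : ℕ) (a b : ℤ) (θ : Option (Fin r) → ℤ) (m : Option (Fin r) → ℤ → ℤ)
    (k : ℕ) (h0 : r + 2 ≤ k) (h1 : k ≤ 2 * r + 1) :
    coeffFn r a b θ m k
      = m (some ⟨k - r - 2, by omega⟩) b - m (some ⟨k - r - 2, by omega⟩) a := by
  unfold coeffFn
  rw [dif_neg (by omega), dif_neg (by omega), dif_neg (by omega), dif_pos h1]

lemma coeff_top (r : ℕ) (a b : ℤ) (θ : Option (Fin r) → ℤ) (m : Option (Fin r) → ℤ → ℤ) :
    coeffFn r a b θ m (2 * r + 2) = m none b - m none a := by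
  unfold coeffFn
  rw [dif_neg (by omega), dif_neg (by omega), dif_neg (by omega), dif_neg (by omega),
    dif_pos rfl]

lemma identity (r : ℕ) (a b : ℤ) (T : ℚ) (hT : T ≠ 0) (θ : Option (Fin r) → ℤ)
    (m : Option (Fin r) → ℤ → ℤ) :
    ∑ k ∈ Finset.range (2 * r + 3), ((coeffFn r a b θ m k : ℤ) : ℚ) * T ^ k
      = T ^ (r + 1) * thetaAux r a b T θ m := by
  have e1 : (2 : ℕ) * r + 3 = (r + 2) + (r + 1) := by ring
  rw [e1, Finset.sum_range_add, Finset.sum_range_succ (n := r + 1), Finset.sum_range_succ',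
    Finset.sum_range_succ (n := r)]
  have htop : (r + 2) + r = 2 * r + 2 := by ring
  rw [htop, coeff0, coeff_mid, coeff_top]
  -- low part: ∑ i ∈ range r, coeffFn (i+1) * T^(i+1)
  have hlow : ∑ i ∈ Finset.range r, ((coeffFn r a b θ m (i + 1) : ℤ) : ℚ) * T ^ (i + 1)
      = T ^ (r + 1) * -(∑ i : Fin r, T ^ (-(((i : ℕ) : ℤ) + 1)) * ((m (some i) a : ℤ) : ℚ)) := by
    rw [← Finset.sum_range_reflect]
    have key : ∀ i : Fin r,
        T ^ (r + 1) * -(T ^ (-(((i : ℕ) : ℤ) + 1)) * ((m (some i) a : ℤ) : ℚ))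
          = ((coeffFn r a b θ m ((r - 1 - (i : ℕ)) + 1) : ℤ) : ℚ)
              * T ^ ((r - 1 - (i : ℕ)) + 1) := by
      intro i
      have hi : (i : ℕ) < r := i.2
      have hk : (r - 1 - (i : ℕ)) + 1 = r - (i : ℕ) := by omega
      rw [hk, coeff_low r a b θ m _ (by omega) (by omega)]
      have hfin : (⟨r - (r - (i : ℕ)), by omega⟩ : Fin r) = i := by
        apply Fin.ext; simp; omega
      rw [hfin]
      have hpow : T ^ (r + 1) * T ^ (-(((i : ℕ) : ℤ) + 1)) = T ^ (r - (i : ℕ)) := by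
        rw [← zpow_natCast T (r + 1), ← zpow_add₀ hT, ← zpow_natCast T (r - (i : ℕ))]
        congr 1
        push_cast
        omega
      push_cast
      rw [← hpow]
      ring
    calc ∑ j ∈ Finset.range r, ((coeffFn r a b θ m ((r - 1 - j) + 1) : ℤ) : ℚ) * T ^ ((r - 1 - j) + 1)
        = ∑ i : Fin r, T ^ (r + 1) * -(T ^ (-(((i : ℕ) : ℤ) + 1)) * ((m (some i) a : ℤ) : ℚ)) := by
          rw [← Fin.sum_univ_eq_sum_range
            (fun j => ((coeffFn r a b θ m ((r - 1 - j) + 1) : ℤ) : ℚ) * T ^ ((r - 1 - j) + 1)) r]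
          exact Finset.sum_congr rfl fun i _ => (key i).symm
      _ = T ^ (r + 1) * -(∑ i : Fin r, T ^ (-(((i : ℕ) : ℤ) + 1)) * ((m (some i) a : ℤ) : ℚ)) := by
          rw [← Finset.sum_neg_distrib, Finset.mul_sum]
  -- high part
  have hhigh : ∑ i ∈ Finset.range r, ((coeffFn r a b θ m (r + 2 + i) : ℤ) : ℚ) * T ^ (r + 2 + i)
      = T ^ (r + 1) * ∑ i : Fin r, T ^ ((i : ℕ) + 1) * ((m (some i) b - m (some i) a : ℤ) : ℚ) := by
    have key : ∀ i : Fin r,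
        T ^ (r + 1) * (T ^ ((i : ℕ) + 1) * ((m (some i) b - m (some i) a : ℤ) : ℚ))
          = ((coeffFn r a b θ m (r + 2 + (i : ℕ)) : ℤ) : ℚ) * T ^ (r + 2 + (i : ℕ)) := by
      intro i
      have hi : (i : ℕ) < r := i.2
      rw [coeff_high r a b θ m _ (by omega) (by omega)]
      have hfin : (⟨r + 2 + (i : ℕ) - r - 2, by omega⟩ : Fin r) = i := by
        apply Fin.ext; simp; omega
      rw [hfin, ← mul_assoc, ← pow_add]
      have : r + 1 + ((i : ℕ) + 1) = r + 2 + (i : ℕ) := by omega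
      rw [this]
      push_cast
      ring
    calc ∑ i ∈ Finset.range r, ((coeffFn r a b θ m (r + 2 + i) : ℤ) : ℚ) * T ^ (r + 2 + i)
        = ∑ i : Fin r, T ^ (r + 1) * (T ^ ((i : ℕ) + 1) * ((m (some i) b - m (some i) a : ℤ) : ℚ)) := by
          rw [← Fin.sum_univ_eq_sum_range
            (fun i => ((coeffFn r a b θ m (r + 2 + i) : ℤ) : ℚ) * T ^ (r + 2 + i)) r]
          exact Finset.sum_congr rfl fun i _ => (key i).symm
      _ = _ := by rw [Finset.mul_sum]
  rw [hlow, hhigh]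
  have hsm : T ^ (r + 1) * T ^ (-(r : ℤ) - 1) = 1 := by
    rw [← zpow_natCast T (r + 1), ← zpow_add₀ hT]
    have : ((r + 1 : ℕ) : ℤ) + (-(r : ℤ) - 1) = 0 := by push_cast; omega
    rw [this, zpow_zero]
  unfold thetaAux
  push_cast
  linear_combination
    (-(∑ i : Option (Fin r), ∑ n ∈ Finset.Ioo a b, ((m i n : ℤ) : ℚ))) * hsm

lemma thetaAux_sub (r : ℕ) (a b : ℤ) (T : ℚ) (θ : Option (Fin r) → ℤ)
    (x y : Option (Fin r) → ℤ → ℤ) :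
    thetaAux r a b T θ (fun i n => x i n - y i n)
      = thetaAux r a b T θ x - thetaAux r a b T θ y := by
  unfold thetaAux
  push_cast
  simp only [mul_sub, Finset.sum_sub_distrib]
  ring

lemma coeff_ne (r : ℕ) (a b : ℤ) (hab : a < b) (θ : Option (Fin r) → ℤ)
    (m : Option (Fin r) → ℤ → ℤ)
    (hpos : ∀ i, ∀ n ∈ Finset.Icc a b, 0 ≤ m i n)
    (h0 : m none a = 0)
    (hne : ∃ i, ∃ n ∈ Finset.Icc a b, m i n ≠ 0) :
    ∃ j, j < 2 * r + 3 ∧ coeffFn r a b θ m j ≠ 0 := by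
  by_contra hc
  push_neg at hc
  have hma : ∀ i, m i a = 0 := by
    intro i
    match i with
    | none => exact h0
    | some i =>
      have hi : (i : ℕ) < r := i.2
      have := hc (r - (i : ℕ)) (by omega)
      rw [coeff_low r a b θ m _ (by omega) (by omega)] at this
      have hfin : (⟨r - (r - (i : ℕ)), by omega⟩ : Fin r) = i := by
        apply Fin.ext; simp; omega
      rw [hfin] at this
      omega
  have hmb : ∀ i, m i b = 0 := by
    intro i
    match i with
    | none =>
      have := hc (2 * r + 2) (by omega)
      rw [coeff_top] at this
      have := hma none
      omega
    | some i =>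
      have hi : (i : ℕ) < r := i.2
      have := hc (r + 2 + (i : ℕ)) (by omega)
      rw [coeff_high r a b θ m _ (by omega) (by omega)] at this
      have hfin : (⟨r + 2 + (i : ℕ) - r - 2, by omega⟩ : Fin r) = i := by
        apply Fin.ext; simp; omega
      rw [hfin] at this
      have := hma (some i)
      omega
  have hmid : ∀ i, ∀ n ∈ Finset.Ioo a b, m i n = 0 := by
    have h00 := hc 0 (by omega)
    rw [coeff0] at h00
    have hin : ∀ i ∈ (Finset.univ : Finset (Option (Fin r))),
        ∑ n ∈ Finset.Ioo a b, m i n = 0 := by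
      rw [← Finset.sum_eq_zero_iff_of_nonneg]
      · exact h00
      · intro i _
        apply Finset.sum_nonneg
        intro n hn
        exact hpos i n (Finset.mem_Icc.2 (by rw [Finset.mem_Ioo] at hn; omega))
    intro i n hn
    have := (Finset.sum_eq_zero_iff_of_nonneg (fun n hn => hpos i n
      (Finset.mem_Icc.2 (by rw [Finset.mem_Ioo] at hn; omega)))).1
      (hin i (Finset.mem_univ i)) n hn
    exact this
  obtain ⟨i, n, hn, hmn⟩ := hne
  rw [Finset.mem_Icc] at hn
  rcases eq_or_lt_of_le hn.1 with h | h
  · exact hmn (h ▸ hma i)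
  rcases eq_or_lt_of_le hn.2 with h' | h'
  · exact hmn (h' ▸ hmb i)
  exact hmn (hmid i n (Finset.mem_Ioo.2 ⟨h, h'⟩))

/-- bound -/
lemma coeff_bound (r : ℕ) (a b : ℤ) (hab : a < b) (α : Option (Fin r) → ℕ)
    (θ : Option (Fin r) → ℤ) (m : Option (Fin r) → ℤ → ℤ)
    (hm : ∀ i, ∀ n ∈ Finset.Icc a b, |m i n| ≤ (α i : ℤ)) (k : ℕ) :
    |(coeffFn r a b θ m k : ℚ)|
      ≤ (((b - a : ℤ) : ℚ) + 2 + ∑ i : Option (Fin r), |(θ i : ℚ)|)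
          * (∑ i : Option (Fin r), (α i : ℚ)) + 1 := by
  set Θ : ℚ := ∑ i : Option (Fin r), |(θ i : ℚ)| with hΘ
  set S : ℚ := ∑ i : Option (Fin r), (α i : ℚ) with hS
  have hS0 : 0 ≤ S := Finset.sum_nonneg fun i _ => by positivity
  have hΘ0 : 0 ≤ Θ := Finset.sum_nonneg fun i _ => abs_nonneg _
  have hba : (1 : ℚ) ≤ (b : ℚ) - (a : ℚ) := by
    have h : (1 : ℤ) ≤ b - a := by omega
    exact_mod_cast h
  have haI : a ∈ Finset.Icc a b := Finset.mem_Icc.2 ⟨le_refl a, le_of_lt hab⟩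
  have hbI : b ∈ Finset.Icc a b := Finset.mem_Icc.2 ⟨le_of_lt hab, le_refl b⟩
  have hαS : ∀ i : Option (Fin r), (α i : ℚ) ≤ S := fun i =>
    Finset.single_le_sum (f := fun i => ((α i : ℚ))) (fun j _ => by positivity)
      (Finset.mem_univ i)
  have hmq : ∀ i, ∀ n ∈ Finset.Icc a b, |(m i n : ℚ)| ≤ (α i : ℚ) := by
    intro i n hn
    have := hm i n hn
    calc |(m i n : ℚ)| = ((|m i n| : ℤ) : ℚ) := by push_cast; rfl
      _ ≤ ((α i : ℤ) : ℚ) := by exact_mod_cast this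
      _ = (α i : ℚ) := by push_cast; rfl
  unfold coeffFn
  split_ifs with h0 h1 h2 h3 h4
  · -- k = 0 : |ΣΣ m| ≤ (b-a-1)*S ≤ (b-a)*S
    push_cast
    have hcard : ((Finset.Ioo a b).card : ℚ) ≤ (b : ℚ) - (a : ℚ) := by
      rw [Int.card_Ioo]
      have h5 : (((b - a - 1).toNat : ℤ) : ℚ) ≤ ((b - a : ℤ) : ℚ) := by
        have : ((b - a - 1).toNat : ℤ) ≤ b - a := by omega
        exact_mod_cast this
      push_cast at h5 ⊢
      linarith
    calc |∑ i : Option (Fin r), ∑ n ∈ Finset.Ioo a b, (m i n : ℚ)|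
        ≤ ∑ i : Option (Fin r), |∑ n ∈ Finset.Ioo a b, (m i n : ℚ)| :=
          Finset.abs_sum_le_sum_abs _ _
      _ ≤ ∑ i : Option (Fin r), ((Finset.Ioo a b).card : ℚ) * (α i : ℚ) := by
          apply Finset.sum_le_sum
          intro i _
          calc |∑ n ∈ Finset.Ioo a b, (m i n : ℚ)| ≤ ∑ n ∈ Finset.Ioo a b, |(m i n : ℚ)| :=
                Finset.abs_sum_le_sum_abs _ _
            _ ≤ ∑ n ∈ Finset.Ioo a b, (α i : ℚ) := by
                apply Finset.sum_le_sum
                intro n hn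
                exact hmq i n (Finset.mem_Icc.2 (by
                  rw [Finset.mem_Ioo] at hn; omega))
            _ = ((Finset.Ioo a b).card : ℚ) * (α i : ℚ) := by
                rw [Finset.sum_const, nsmul_eq_mul]
      _ = ((Finset.Ioo a b).card : ℚ) * S := by rw [← Finset.mul_sum]
      _ ≤ ((b : ℚ) - (a : ℚ)) * S := mul_le_mul_of_nonneg_right hcard hS0
      _ ≤ _ := by nlinarith [mul_nonneg hΘ0 hS0, hS0]
  · -- 1 ≤ k ≤ r
    push_cast
    rw [abs_neg]
    have := hmq (some ⟨r - k, by omega⟩) a haI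
    have := hαS (some ⟨r - k, by omega⟩)
    nlinarith [mul_nonneg (by linarith : (0:ℚ) ≤ (b:ℚ) - (a:ℚ) + 1 + Θ) hS0]
  · -- k = r + 1
    push_cast
    calc |∑ i : Option (Fin r), (θ i : ℚ) * (m i a : ℚ)|
        ≤ ∑ i : Option (Fin r), |(θ i : ℚ) * (m i a : ℚ)| := Finset.abs_sum_le_sum_abs _ _
      _ ≤ ∑ i : Option (Fin r), |(θ i : ℚ)| * S := by
          apply Finset.sum_le_sum
          intro i _
          rw [abs_mul]
          have h1 := hmq i a haI
          have h2 := hαS i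
          have := abs_nonneg ((θ i : ℚ))
          nlinarith [abs_nonneg ((m i a : ℚ))]
      _ = Θ * S := by rw [← Finset.sum_mul]
      _ ≤ _ := by nlinarith [mul_nonneg (by linarith : (0:ℚ) ≤ (b:ℚ) - (a:ℚ) + 2) hS0]
  · -- r + 2 ≤ k ≤ 2r + 1
    push_cast
    have h1 := hmq (some ⟨k - r - 2, by omega⟩) a haI
    have h2 := hmq (some ⟨k - r - 2, by omega⟩) b hbI
    have h3 := hαS (some ⟨k - r - 2, by omega⟩)
    have habs : |(m (some ⟨k - r - 2, by omega⟩) b : ℚ) - (m (some ⟨k - r - 2, by omega⟩) a : ℚ)|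
        ≤ |(m (some ⟨k - r - 2, by omega⟩) b : ℚ)| + |(m (some ⟨k - r - 2, by omega⟩) a : ℚ)| := by
      rw [sub_eq_add_neg]
      exact (abs_add_le _ _).trans (by rw [abs_neg])
    nlinarith [mul_nonneg (by linarith : (0:ℚ) ≤ (b:ℚ) - (a:ℚ) + Θ) hS0]
  · -- k = 2r + 2
    push_cast
    have h1 := hmq none a haI
    have h2 := hmq none b hbI
    have h3 := hαS none
    have habs : |(m none b : ℚ) - (m none a : ℚ)| ≤ |(m none b : ℚ)| + |(m none a : ℚ)| := by
      rw [sub_eq_add_neg]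
      exact (abs_add_le _ _).trans (by rw [abs_neg])
    nlinarith [mul_nonneg (by linarith : (0:ℚ) ≤ (b:ℚ) - (a:ℚ) + Θ) hS0]
  · simp only [Int.cast_zero, abs_zero]
    push_cast
    nlinarith [mul_nonneg (by linarith : (0:ℚ) ≤ (b:ℚ) - (a:ℚ) + 2 + Θ) hS0]


theorem stmt5 (r : ℕ) (a b : ℤ) (hab : a < b)
    (α : Option (Fin r) → ℕ) (hα : α none = 1)
    (θ : Option (Fin r) → ℤ) :
    ∃ T₀ : ℚ, 0 < T₀ ∧ ∀ T : ℚ, T₀ ≤ T →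
      ∀ m : Option (Fin r) → ℤ → ℤ,
        (∀ i, ∀ n ∈ Finset.Icc a b, 0 ≤ m i n ∧ m i n ≤ (α i : ℤ)) →
        (¬ ∀ i, ∀ n ∈ Finset.Icc a b, m i n = 0) →
        (¬ ∀ i, ∀ n ∈ Finset.Icc a b, m i n = (α i : ℤ)) →
        thetaGtr r a b T θ α m ≠ 0 := by
  set Θ : ℚ := ∑ i : Option (Fin r), |(θ i : ℚ)| with hΘ
  set S : ℚ := ∑ i : Option (Fin r), (α i : ℚ) with hS
  set B : ℚ := (((b - a : ℤ) : ℚ) + 2 + Θ) * S + 1 with hB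
  have hΘ0 : 0 ≤ Θ := Finset.sum_nonneg fun i _ => abs_nonneg _
  have hS1 : 1 ≤ S := by
    have h1 : (α none : ℚ) ≤ S :=
      Finset.single_le_sum (f := fun i => ((α i : ℚ))) (fun j _ => by positivity)
        (Finset.mem_univ none)
    rw [hα] at h1
    exact_mod_cast h1
  have hba : (1 : ℚ) ≤ ((b - a : ℤ) : ℚ) := by
    have h : (1 : ℤ) ≤ b - a := by omega
    exact_mod_cast h
  have hB1 : 1 ≤ B := by nlinarith
  refine ⟨2 * B + 1, by linarith, ?_⟩
  intro T hT m hm hne0 hneα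
  have hT0 : T ≠ 0 := by intro h; rw [h] at hT; linarith
  have haI : a ∈ Finset.Icc a b := Finset.mem_Icc.2 ⟨le_refl a, le_of_lt hab⟩
  -- the core nonvanishing claim
  have core : ∀ m' : Option (Fin r) → ℤ → ℤ,
      (∀ i, ∀ n ∈ Finset.Icc a b, 0 ≤ m' i n ∧ m' i n ≤ (α i : ℤ)) →
      m' none a = 0 →
      (∃ i, ∃ n ∈ Finset.Icc a b, m' i n ≠ 0) →
      thetaAux r a b T θ m' ≠ 0 := by
    intro m' hm' h0' hne' hcontra
    have hbd : ∀ k, |(coeffFn r a b θ m' k : ℚ)| ≤ B := by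
      intro k
      exact coeff_bound r a b hab α θ m'
        (fun i n hn => by have h := hm' i n hn; rw [abs_le]; omega) k
    have hkey := keylemma (2 * r + 3) (coeffFn r a b θ m') B T hbd hT
      (coeff_ne r a b hab θ m' (fun i n hn => (hm' i n hn).1) h0' hne')
    apply hkey
    rw [identity r a b T hT0 θ m', hcontra, mul_zero]
  have hma01 : m none a = 0 ∨ m none a = 1 := by
    have := hm none a haI
    rw [hα] at this
    omega
  rcases hma01 with h0 | h1
  · -- case m_{∞,a} = 0
    push_neg at hne0
    have : thetaGtr r a b T θ α m = thetaAux r a b T θ m := by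
      unfold thetaGtr
      rw [h0]
      push_cast
      ring
    rw [this]
    exact core m hm h0 hne0
  · -- case m_{∞,a} = 1
    push_neg at hneα
    set m' : Option (Fin r) → ℤ → ℤ := fun i n => (α i : ℤ) - m i n with hm'def
    have hG : thetaGtr r a b T θ α m = -(thetaAux r a b T θ m') := by
      unfold thetaGtr
      have := thetaAux_sub r a b T θ (fun i _ => (α i : ℤ)) m
      rw [hm'def]
      rw [show (fun i n => (α i : ℤ) - m i n)
          = (fun i n => (fun i _ => (α i : ℤ)) i n - m i n) from rfl, this, h1]
      push_cast
      ring
    rw [hG, neg_ne_zero]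
    apply core m'
    · intro i n hn
      have := hm i n hn
      simp only [hm'def]
      omega
    · simp only [hm'def, h1, hα]
      norm_num
    · obtain ⟨i, n, hn, hmn⟩ := hneα
      exact ⟨i, n, hn, by simp only [hm'def]; omega⟩
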